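/- arXiv:2009.04529 — 3 statements merged into one kernel-verified Lean document; each statement's English description precedes it below -/
import Mathlib

section
/- For all integers s ≥ 2 and all integers k, n with 0 ≤ k < n, the guessing number of the join of a complete graph on k vertices with an empty graph on n−k vertices satisfies gn(K_k ⊕ E_{n−k}, s) = k. -/
open SimpleGraph

/-- A strategy for the guessing game on `G` with `s` colors: a family of guessing
functions, one per vertex, where each vertex's guess depends only on the colors
of the vertices in its (open) neighborhood. -/
def IsGuessingStrategy {V : Type*} (G : SimpleGraph V) (s : ℕ)
    (f : V → (V → Fin s) → Fin s) : Prop :=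
  ∀ (v : V) (c₁ c₂ : V → Fin s), (∀ u, G.Adj v u → c₁ u = c₂ u) → f v c₁ = f v c₂

/-- The maximum, over all strategies for the guessing game on `G` with `s` colors,
of the number of fixed points of the strategy (colorings where every vertex
guesses its own color correctly). -/
noncomputable def maxFixedPoints {V : Type*} (G : SimpleGraph V) (s : ℕ) : ℕ :=
  sSup {n : ℕ | ∃ f : V → (V → Fin s) → Fin s, IsGuessingStrategy G s f ∧
    n = Nat.card {c : V → Fin s // ∀ v, f v c = c v}}

/-- The guessing number of `G` with `s` colors: the logarithm base `s` of the
maximum number of fixed points of a strategy. -/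
noncomputable def guessingNumber {V : Type*} (G : SimpleGraph V) (s : ℕ) : ℝ :=
  Real.logb s (maxFixedPoints G s)

/-- The join `K_k ⊕ E_{n-k}`: the first `k` vertices form a clique and are joined
to all other vertices; the remaining `n - k` vertices form an independent set. -/
def cliqueJoinEmpty (n k : ℕ) : SimpleGraph (Fin n) :=
  SimpleGraph.fromRel (fun u _ => (u : ℕ) < k)

/-- The extremal number `ex(n, gn_s ≥ a)`: the maximum number of edges over all
graphs on `n` vertices whose guessing number with `s` colors is `< a`. -/
noncomputable def exGN (n s : ℕ) (a : ℝ) : ℕ :=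
  sSup {m : ℕ | ∃ G : SimpleGraph (Fin n),
    guessingNumber G s < a ∧ m = Nat.card G.edgeSet}

/-- `G` is `(gn_s ≥ a)`-saturated: `gn(G,s) < a` but adding any missing edge
raises the guessing number to at least `a`. -/
def GNSaturated {V : Type*} (G : SimpleGraph V) (s : ℕ) (a : ℝ) : Prop :=
  guessingNumber G s < a ∧
    ∀ u w : V, u ≠ w → ¬G.Adj u w →
      a ≤ guessingNumber (G ⊔ SimpleGraph.fromEdgeSet {s(u, w)}) s

/-- The saturation number `sat(n, gn_s ≥ a)`: the minimum number of edges over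
all `(gn_s ≥ a)`-saturated graphs on `n` vertices. -/
noncomputable def satGN (n s : ℕ) (a : ℝ) : ℕ :=
  sInf {m : ℕ | ∃ G : SimpleGraph (Fin n),
    GNSaturated G s a ∧ m = Nat.card G.edgeSet}

/-- The disjoint union `H + E_{n-h}` of a graph `H` on `h` vertices with `n - h`
isolated vertices, realized on `Fin n`. -/
def withIsolated {h : ℕ} (H : SimpleGraph (Fin h)) (n : ℕ) : SimpleGraph (Fin n) :=
  SimpleGraph.fromRel (fun u v =>
    ∃ (hu : (u : ℕ) < h) (hv : (v : ℕ) < h), H.Adj ⟨u, hu⟩ ⟨v, hv⟩)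

/-- `K*_{a,a}`: the complete bipartite graph `K_{a,a}` with one subdivided edge.
Vertices `0, …, a-1` are `x_1, …, x_a`; vertices `a, …, 2a-1` are `y_1, …, y_a`;
vertex `2a` is the subdivision vertex `v_0`, adjacent exactly to `x_1` and `y_1`.
The edge `x_1 y_1` is removed. -/
def Kstar (a : ℕ) : SimpleGraph (Fin (2 * a + 1)) :=
  SimpleGraph.fromRel (fun u v =>
    ((u : ℕ) < a ∧ a ≤ (v : ℕ) ∧ (v : ℕ) < 2 * a ∧ ¬((u : ℕ) = 0 ∧ (v : ℕ) = a)) ∨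
    ((u : ℕ) = 2 * a ∧ ((v : ℕ) = 0 ∨ (v : ℕ) = a)))

/-- Add `b` dominating vertices to a graph `H` on `m` vertices: the first `b`
vertices are adjacent to everything else (and each other), the remaining `m`
vertices induce a copy of `H`. -/
def withDominating {m : ℕ} (H : SimpleGraph (Fin m)) (b : ℕ) :
    SimpleGraph (Fin (b + m)) :=
  SimpleGraph.fromRel (fun u v =>
    (u : ℕ) < b ∨ (v : ℕ) < b ∨
      ∃ (hu : b ≤ (u : ℕ)) (hv : b ≤ (v : ℕ)),
        H.Adj ⟨(u : ℕ) - b, by have := u.isLt; omega⟩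
          ⟨(v : ℕ) - b, by have := v.isLt; omega⟩)

/-- `F` is a minimal graph with `gn_s ≥ a`: its guessing number with `s` colors
is at least `a`, but every proper subgraph has guessing number `< a`. -/
def MinimalGN {V : Type*} [Finite V] (F : SimpleGraph V) (s : ℕ) (a : ℝ) : Prop :=
  a ≤ guessingNumber F s ∧
    ∀ H : F.Subgraph, H ≠ ⊤ → guessingNumber H.coe s < a

/-!
If every vertex outside a set `S` has all its neighbours in `S`, a fixed point of any strategy
is determined by its restriction to `S`, so there are at most `s ^ |S|` fixed points. Conversely,
on a clique of `k + 1` vertices each vertex may guess that the colours of the clique sum to `0`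
modulo `s`; all vertices are right exactly on the `s ^ k` colourings of zero sum. In
`K_k ⊕ E_{n-k}` the clique `K_k` is such a set `S`, and together with any one vertex of `E_{n-k}`
it forms a clique of size `k + 1`.
-/

open Finset

section GuessingGame

variable {V : Type*} {G : SimpleGraph V} {s : ℕ}

lemma card_fixedPoints_le_maxFixedPoints [Finite V] {f : V → (V → Fin s) → Fin s}
    (hf : IsGuessingStrategy G s f) :
    Nat.card {c : V → Fin s // ∀ v, f v c = c v} ≤ maxFixedPoints G s := by
  refine le_csSup ⟨Nat.card (V → Fin s), ?_⟩ ⟨f, hf, rfl⟩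
  rintro _ ⟨g, -, rfl⟩
  exact Nat.card_le_card_of_injective _ Subtype.val_injective

lemma maxFixedPoints_le {m : ℕ}
    (h : ∀ f, IsGuessingStrategy G s f →
      Nat.card {c : V → Fin s // ∀ v, f v c = c v} ≤ m) :
    maxFixedPoints G s ≤ m := by
  refine csSup_le' ?_
  rintro _ ⟨f, hf, rfl⟩
  exact h f hf

lemma card_fixedPoints_le_of_forall_adj_mem {f : V → (V → Fin s) → Fin s}
    (hf : IsGuessingStrategy G s f) (S : Finset V)
    (hS : ∀ v ∉ S, ∀ u, G.Adj v u → u ∈ S) :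
    Nat.card {c : V → Fin s // ∀ v, f v c = c v} ≤ s ^ #S := by
  have hinj : Function.Injective
      fun (c : {c : V → Fin s // ∀ v, f v c = c v}) (u : S) => c.1 u := by
    intro c₁ c₂ hc
    have hagree : ∀ u ∈ S, c₁.1 u = c₂.1 u := fun u hu => congrFun hc ⟨u, hu⟩
    refine Subtype.ext (funext fun v => ?_)
    by_cases hv : v ∈ S
    · exact hagree v hv
    · rw [← c₁.2 v, ← c₂.2 v]
      exact hf v _ _ fun u huv => hagree u (hS v hv u huv)
  simpa [Nat.card_fun] using Nat.card_le_card_of_injective _ hinj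

variable [DecidableEq V] [NeZero s]

def cliqueSumStrategy (T : Finset V) (v : V) (c : V → Fin s) : Fin s :=
  if v ∈ T then -∑ u ∈ T.erase v, c u else 0

lemma isGuessingStrategy_cliqueSumStrategy {T : Finset V} (hT : G.IsClique (T : Set V)) :
    IsGuessingStrategy G s (cliqueSumStrategy T) := by
  intro v c₁ c₂ h
  unfold cliqueSumStrategy
  split_ifs with hv
  · congr 1
    refine sum_congr rfl fun u hu => h u ?_
    obtain ⟨huv, hu⟩ := mem_erase.1 hu
    exact hT hv hu huv.symm
  · rfl

lemma cliqueSumStrategy_eq_self {T : Finset V} {c : V → Fin s} (hout : ∀ v ∉ T, c v = 0)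
    (hsum : ∑ u ∈ T, c u = 0) (v : V) : cliqueSumStrategy T v c = c v := by
  unfold cliqueSumStrategy
  split_ifs with hv
  · rw [← add_sum_erase T c hv, add_comm] at hsum
    exact neg_eq_of_add_eq_zero_right hsum
  · exact (hout v hv).symm

lemma pow_le_card_fixedPoints_cliqueSumStrategy [Finite V] {T : Finset V} {t₀ : V}
    (ht₀ : t₀ ∈ T) :
    s ^ (#T - 1) ≤
      Nat.card {c : V → Fin s // ∀ v, cliqueSumStrategy T v c = c v} := by
  let extend (a : T.erase t₀ → Fin s) (v : V) : Fin s :=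
    if h : v ∈ T.erase t₀ then a ⟨v, h⟩ else if v = t₀ then -∑ u, a u else 0
  have extend_of_mem (a) {v} (h : v ∈ T.erase t₀) : extend a v = a ⟨v, h⟩ := dif_pos h
  have extend_fixed (a) (v) : cliqueSumStrategy T v (extend a) = extend a v := by
    refine cliqueSumStrategy_eq_self (fun u hu => ?_) ?_ v
    · have hu' : u ∉ T.erase t₀ := fun h => hu (mem_of_mem_erase h)
      have hut₀ : u ≠ t₀ := fun h => hu (h ▸ ht₀)
      simp only [extend, dif_neg hu', if_neg hut₀]
    · rw [← add_sum_erase T _ ht₀, ← sum_coe_sort (T.erase t₀)]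
      simp only [extend_of_mem a (coe_mem _)]
      simp [extend]
  have hinj : Function.Injective fun a => (⟨extend a, extend_fixed a⟩ :
      {c : V → Fin s // ∀ v, cliqueSumStrategy T v c = c v}) := by
    intro a₁ a₂ h
    funext u
    simpa [extend_of_mem _ u.2] using congrFun (congrArg Subtype.val h) u
  simpa only [Nat.card_fun, Nat.card_eq_finsetCard, Nat.card_fin, card_erase_of_mem ht₀] using
    Nat.card_le_card_of_injective _ hinj

lemma pow_le_maxFixedPoints_of_isNClique [Finite V] {k : ℕ} {T : Finset V}
    (hT : G.IsNClique (k + 1) T) : s ^ k ≤ maxFixedPoints G s := by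
  obtain ⟨t₀, ht₀⟩ : T.Nonempty := by simp [← card_pos, hT.card_eq]
  calc s ^ k = s ^ (#T - 1) := by rw [hT.card_eq, Nat.add_sub_cancel]
    _ ≤ _ := pow_le_card_fixedPoints_cliqueSumStrategy ht₀
    _ ≤ _ :=
      card_fixedPoints_le_maxFixedPoints (isGuessingStrategy_cliqueSumStrategy hT.isClique)

end GuessingGame

lemma cliqueJoinEmpty_adj {n k : ℕ} {u v : Fin n} :
    (cliqueJoinEmpty n k).Adj u v ↔ u ≠ v ∧ ((u : ℕ) < k ∨ (v : ℕ) < k) := by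
  simp [cliqueJoinEmpty]

lemma cliqueJoinEmpty_adj_mem_Iio {n k : ℕ} (hk : k < n) {v u : Fin n}
    (hv : v ∉ Iio ⟨k, hk⟩) (huv : (cliqueJoinEmpty n k).Adj v u) : u ∈ Iio ⟨k, hk⟩ := by
  simp only [mem_Iio, not_lt, cliqueJoinEmpty_adj, Fin.lt_def] at *
  omega

lemma isNClique_cliqueJoinEmpty_Iic {n k : ℕ} (hk : k < n) :
    (cliqueJoinEmpty n k).IsNClique (k + 1) (Iic ⟨k, hk⟩) := by
  refine ⟨fun u hu v hv huv => cliqueJoinEmpty_adj.2 ⟨huv, ?_⟩, Fin.card_Iic _⟩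
  simp only [coe_Iic, Set.mem_Iic, Fin.le_def] at hu hv
  have : (u : ℕ) ≠ v := Fin.val_ne_of_ne huv
  omega

/-- For all integers `s ≥ 2` and `0 ≤ k < n`, the guessing number of the join
`K_k ⊕ E_{n-k}` with `s` colors equals `k`. -/
theorem guessingNumber_cliqueJoinEmpty (s n k : ℕ) (hs : 2 ≤ s) (hk : k < n) :
    guessingNumber (cliqueJoinEmpty n k) s = k := by
  have : NeZero s := ⟨by omega⟩
  have hmax : maxFixedPoints (cliqueJoinEmpty n k) s = s ^ k := by
    refine le_antisymm (maxFixedPoints_le fun f hf => ?_)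
      (pow_le_maxFixedPoints_of_isNClique (isNClique_cliqueJoinEmpty_Iic hk))
    simpa [Fin.card_Iio] using card_fixedPoints_le_of_forall_adj_mem hf _
      fun v hv u => cliqueJoinEmpty_adj_mem_Iio hk hv
  rw [guessingNumber, hmax, Nat.cast_pow, Real.logb_pow,
    Real.logb_self_eq_one (by exact_mod_cast hs), mul_one]
end

section
/- Let s ≥ 2 be an integer, let a be a real number with a > 0, let k = ⌈a⌉ − 1, and let n be an integer with n > ⌈a⌉. Then the extremal number satisfies ex(n, gn_s ≥ a) = C(n,2) − C(n−k,2); that is, the maximum number of edges over all graphs on n vertices with guessing number gn(G,s) < a equals C(n,2) − C(n−k,2). -/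
open SimpleGraph

/-!
The graph `K_k ⊕ E_{n-k}` has `C(n,2) - C(n-k,2)` edges, and its first `k` vertices form a
vertex cover, so every fixed point of a strategy is determined by its values there: its guessing
number is at most `k < a`.

Conversely, split the vertices of `G` into the `t` color classes of a coloring of `Gᶜ` with the
fewest colors; these are cliques of `G`. If every vertex guesses that the colors on its clique sum
to zero in `ℤ/s`, the fixed points form the kernel of a homomorphism `(ℤ/s)^n → (ℤ/s)^t`, so there
are at least `s^(n-t)` of them. By minimality any two classes are joined by an edge of `Gᶜ`, so
`C(t,2) ≤ e(Gᶜ) = C(n,2) - e(G)`. Hence `e(G) > C(n,2) - C(n-k,2)` forces `t < n - k`, and then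
`gn(G,s) ≥ n - t ≥ k + 1 ≥ a`.
-/

open Finset

def Fin.addLeftEmb (n k : ℕ) : Fin (n - k) ↪ Fin n where
  toFun j := ⟨k + j, by have := j.isLt; omega⟩
  inj' _ _ h := Fin.ext (by simpa using h)

@[simp]
lemma Fin.val_addLeftEmb {n k : ℕ} (j : Fin (n - k)) : (Fin.addLeftEmb n k j : ℕ) = k + j := rfl

namespace SimpleGraph

variable {V : Type*} {G : SimpleGraph V} {s : ℕ}

section FixedPoints

lemma maxFixedPoints_le {M : ℕ}
    (h : ∀ f, IsGuessingStrategy G s f → Nat.card {c : V → Fin s // ∀ v, f v c = c v} ≤ M) :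
    maxFixedPoints G s ≤ M :=
  csSup_le' <| by rintro _ ⟨f, hf, rfl⟩; exact h f hf

lemma maxFixedPoints_le_pow_card_of_isVertexCover {S : Finset V} (hS : G.IsVertexCover S) :
    maxFixedPoints G s ≤ s ^ #S := by
  refine maxFixedPoints_le fun f hf => ?_
  have hinj : Function.Injective fun c : {c : V → Fin s // ∀ v, f v c = c v} =>
      fun u : S => c.1 u := by
    rintro ⟨c₁, h₁⟩ ⟨c₂, h₂⟩ heq
    have hS' (u : V) (hu : u ∈ S) : c₁ u = c₂ u := congrFun heq ⟨u, hu⟩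
    refine Subtype.ext <| funext fun v => ?_
    by_cases hv : v ∈ S
    · exact hS' v hv
    · change c₁ v = c₂ v
      rw [← h₁, ← h₂]
      exact hf v c₁ c₂ fun u hvu => hS' u ((hS hvu).resolve_left hv)
  simpa [Nat.card_fun] using Nat.card_le_card_of_injective _ hinj

lemma card_fixedPoints_le_maxFixedPoints [Finite V] {f : V → (V → Fin s) → Fin s}
    (hf : IsGuessingStrategy G s f) :
    Nat.card {c : V → Fin s // ∀ v, f v c = c v} ≤ maxFixedPoints G s :=
  le_csSup ⟨Nat.card (V → Fin s), by rintro _ ⟨f, -, rfl⟩; exact Finite.card_subtype_le _⟩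
    ⟨f, hf, rfl⟩

lemma guessingNumber_le_of_maxFixedPoints_le (hs : 1 < s) {j : ℕ}
    (h : maxFixedPoints G s ≤ s ^ j) : guessingNumber G s ≤ j := by
  have hs' : (1 : ℝ) < s := by exact_mod_cast hs
  rcases (maxFixedPoints G s).eq_zero_or_pos with h0 | h0
  · simp [guessingNumber, h0]
  · rw [guessingNumber, Real.logb_le_iff_le_rpow hs' (by exact_mod_cast h0), Real.rpow_natCast]
    exact_mod_cast h

lemma sub_le_guessingNumber (hs : 1 < s) {m t : ℕ}
    (h : s ^ m ≤ s ^ t * maxFixedPoints G s) : (m : ℝ) - t ≤ guessingNumber G s := by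
  have hs' : (1 : ℝ) < s := by exact_mod_cast hs
  have hpos : 0 < maxFixedPoints G s :=
    Nat.pos_of_mul_pos_left <| (Nat.pow_pos (n := m) (by omega)).trans_le h
  rw [guessingNumber, Real.le_logb_iff_rpow_le hs' (by exact_mod_cast hpos),
    Real.rpow_sub (by positivity), Real.rpow_natCast, Real.rpow_natCast,
    div_le_iff₀ (by positivity), mul_comm]
  exact_mod_cast h

end FixedPoints

section CliqueStrategy

variable {α : Type*}

lemma Coloring.adj_of_compl {C : Gᶜ.Coloring α} {u v : V} (huv : u ≠ v) (h : C u = C v) :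
    G.Adj u v := by
  by_contra hnadj
  exact C.valid ⟨huv, hnadj⟩ h

variable [Fintype V] [DecidableEq V] [DecidableEq α] [NeZero s]

def cliqueStrategy (C : V → α) (v : V) (c : V → Fin s) : Fin s :=
  -∑ u ∈ ({u | C u = C v} : Finset V).erase v, c u

lemma isGuessingStrategy_cliqueStrategy (C : Gᶜ.Coloring α) :
    IsGuessingStrategy G s (cliqueStrategy C) := by
  intro v c₁ c₂ h
  refine congrArg Neg.neg (sum_congr rfl fun u hu => h u ?_)
  obtain ⟨huv, hu⟩ := mem_erase.1 hu
  exact Coloring.adj_of_compl huv.symm (mem_filter.1 hu).2.symm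

lemma cliqueStrategy_fixed_iff (C : V → α) (c : V → Fin s) :
    (∀ v, cliqueStrategy C v c = c v) ↔ ∀ i, ∑ u ∈ ({u | C u = i} : Finset V), c u = 0 := by
  have hsplit (v : V) : ∑ u ∈ ({u | C u = C v} : Finset V), c u =
      c v + ∑ u ∈ ({u | C u = C v} : Finset V).erase v, c u :=
    (add_sum_erase _ c (by simp)).symm
  simp only [cliqueStrategy, eq_comm (b := c _), ← add_eq_zero_iff_eq_neg, ← hsplit]
  refine ⟨fun h i => ?_, fun h v => h (C v)⟩
  by_cases hi : ∃ v, C v = i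
  · obtain ⟨v, rfl⟩ := hi
    exact h v
  · exact sum_eq_zero fun u hu => (hi ⟨u, (mem_filter.1 hu).2⟩).elim

def classSum (C : V → α) : (V → Fin s) →+ (α → Fin s) where
  toFun c i := ∑ u ∈ ({u | C u = i} : Finset V), c u
  map_zero' := by ext; simp
  map_add' c₁ c₂ := by ext; simp [sum_add_distrib]

lemma pow_card_le_pow_card_mul_maxFixedPoints [Fintype α] (C : Gᶜ.Coloring α) :
    s ^ Fintype.card V ≤ s ^ Fintype.card α * maxFixedPoints G s := by
  set φ : (V → Fin s) →+ (α → Fin s) := classSum C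
  have hfix : Nat.card {c : V → Fin s // ∀ v, cliqueStrategy C v c = c v} = Nat.card φ.ker :=
    Nat.card_congr <| Equiv.subtypeEquivRight fun c => by
      rw [cliqueStrategy_fixed_iff, AddMonoidHom.mem_ker, funext_iff]; rfl
  calc s ^ Fintype.card V = Nat.card φ.range * Nat.card φ.ker := by
        rw [← AddSubgroup.index_ker, mul_comm, AddSubgroup.card_mul_index]; simp
    _ ≤ s ^ Fintype.card α * maxFixedPoints G s := by
      gcongr
      · simpa using Nat.card_le_card_of_injective _ φ.range.subtype_injective
      · exact hfix ▸ card_fixedPoints_le_maxFixedPoints (isGuessingStrategy_cliqueStrategy C)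

end CliqueStrategy

namespace Coloring

variable {H : SimpleGraph V} {α : Type*}

lemma not_isDiag_map {C : H.Coloring α} {e : Sym2 V} (he : e ∈ H.edgeSet) :
    ¬(e.map C).IsDiag := by
  induction e using Sym2.ind
  simpa using C.valid he

variable [Fintype α]

lemma exists_adj_of_forall_not_colorable (C : H.Coloring α)
    (hmin : ∀ m < Fintype.card α, ¬H.Colorable m) {i j : α} (hij : i ≠ j) :
    ∃ u v, H.Adj u v ∧ C u = i ∧ C v = j := by
  classical
  by_contra! hno
  refine hmin (Fintype.card α - 1) (Nat.sub_lt (Fintype.card_pos_iff.2 ⟨i⟩) one_pos) ?_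
  -- otherwise recoloring the class `j` with `i` saves a color
  let C' : H.Coloring {x // x ≠ j} :=
    Coloring.mk (fun v => if h : C v = j then ⟨i, hij⟩ else ⟨C v, h⟩) fun {u v} huv => by
      split_ifs with hu hv hv
      · exact (C.valid huv (hu.trans hv.symm)).elim
      · exact fun h => hno v u huv.symm (congrArg Subtype.val h).symm hu
      · exact fun h => hno u v huv (congrArg Subtype.val h) hv
      · exact fun h => C.valid huv (congrArg Subtype.val h)
  simpa [Fintype.card_subtype_compl] using C'.colorable

lemma choose_two_le_card_edgeSet [Finite V] (C : H.Coloring α)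
    (hmin : ∀ m < Fintype.card α, ¬H.Colorable m) :
    (Fintype.card α).choose 2 ≤ Nat.card H.edgeSet := by
  classical
  rw [← Sym2.card_subtype_not_diag, ← Nat.card_eq_fintype_card]
  refine Nat.card_le_card_of_surjective (fun e => ⟨e.1.map C, not_isDiag_map e.2⟩) ?_
  rintro ⟨z, hz⟩
  induction z using Sym2.ind with | _ i j => ?_
  obtain ⟨u, v, huv, rfl, rfl⟩ := C.exists_adj_of_forall_not_colorable hmin (by simpa using hz)
  exact ⟨⟨s(u, v), huv⟩, rfl⟩

end Coloring

lemma card_edgeSet_add_card_edgeSet_compl [Fintype V] (G : SimpleGraph V) :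
    Nat.card G.edgeSet + Nat.card Gᶜ.edgeSet = (Fintype.card V).choose 2 := by
  classical
  rw [← Sym2.card_diagSet_compl, ← Nat.card_eq_fintype_card, ← edgeSet_top,
    ← sup_compl_eq_top (x := G), edgeSet_sup, Nat.card_coe_set_eq, Nat.card_coe_set_eq,
    Nat.card_coe_set_eq, Set.ncard_union_eq (disjoint_edgeSet.2 disjoint_compl_right)]

section CliqueJoinEmpty

variable {n k : ℕ}

lemma cliqueJoinEmpty_adj {u v : Fin n} :
    (cliqueJoinEmpty n k).Adj u v ↔ u ≠ v ∧ ((u : ℕ) < k ∨ (v : ℕ) < k) := by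
  simp [cliqueJoinEmpty]

lemma compl_cliqueJoinEmpty :
    (cliqueJoinEmpty n k)ᶜ = (⊤ : SimpleGraph (Fin (n - k))).map (Fin.addLeftEmb n k) := by
  ext u v
  simp only [compl_adj, cliqueJoinEmpty_adj, map_adj, top_adj, ne_eq, Fin.ext_iff,
    Fin.val_addLeftEmb]
  constructor
  · rintro ⟨huv, h⟩
    exact ⟨⟨u - k, by omega⟩, ⟨v - k, by omega⟩, by simp only; omega, by simp only; omega,
      by simp only; omega⟩
  · rintro ⟨u', v', huv, hu, hv⟩
    omega

lemma card_edgeSet_cliqueJoinEmpty :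
    Nat.card (cliqueJoinEmpty n k).edgeSet = n.choose 2 - (n - k).choose 2 := by
  classical
  have h := card_edgeSet_add_card_edgeSet_compl (cliqueJoinEmpty n k)
  rw [compl_cliqueJoinEmpty, edgeSet_map,
    Nat.card_image_of_injective (Fin.addLeftEmb n k).sym2Map.injective, edgeSet_top,
    Nat.card_eq_fintype_card (α := ↑Sym2.diagSetᶜ), Sym2.card_diagSet_compl] at h
  simp only [Fintype.card_fin] at h
  omega

lemma guessingNumber_cliqueJoinEmpty_le (hs : 1 < s) :
    guessingNumber (cliqueJoinEmpty n k) s ≤ k := by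
  have hS : (cliqueJoinEmpty n k).IsVertexCover ({v | (v : ℕ) < k} : Finset (Fin n)) :=
    fun u v huv => by simpa using (cliqueJoinEmpty_adj.1 huv).2
  refine guessingNumber_le_of_maxFixedPoints_le hs <|
    (maxFixedPoints_le_pow_card_of_isVertexCover hS).trans (Nat.pow_le_pow_right (by omega) ?_)
  rw [Fin.card_filter_val_lt]
  exact min_le_right n k

end CliqueJoinEmpty

theorem card_edgeSet_le_of_guessingNumber_lt [Fintype V] (hs : 1 < s) {k : ℕ}
    (hG : guessingNumber G s < k + 1) :
    Nat.card G.edgeSet ≤ (Fintype.card V).choose 2 - (Fintype.card V - k).choose 2 := by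
  classical
  have : NeZero s := ⟨by omega⟩
  have hcol : ∃ t, Gᶜ.Colorable t := ⟨_, Gᶜ.colorable_of_fintype⟩
  set t := Nat.find hcol
  obtain ⟨C⟩ : Gᶜ.Colorable t := Nat.find_spec hcol
  have hmin : ∀ m < Fintype.card (Fin t), ¬Gᶜ.Colorable m :=
    fun m hm => Nat.find_min hcol (by rwa [Fintype.card_fin] at hm)
  have hchoose := C.choose_two_le_card_edgeSet hmin
  have hgn := sub_le_guessingNumber hs (pow_card_le_pow_card_mul_maxFixedPoints C)
  rw [Fintype.card_fin] at hgn hchoose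
  have ht : Fintype.card V - k ≤ t := by
    have hlt : (Fintype.card V : ℝ) < t + k + 1 := by linarith
    have hlt' : Fintype.card V < t + k + 1 := by exact_mod_cast hlt
    omega
  have hmono := Nat.choose_le_choose 2 ht
  have hsum := card_edgeSet_add_card_edgeSet_compl G
  omega

end SimpleGraph

theorem exGN_eq_general (s : ℕ) (hs : 2 ≤ s) (a : ℝ) (k n : ℕ)
    (hk : (k : ℤ) = ⌈a⌉ - 1) :
    exGN n s a = n.choose 2 - (n - k).choose 2 := by
  obtain ⟨hka, hak⟩ := Int.ceil_eq_iff.1 (show ⌈a⌉ = (k : ℤ) + 1 by omega)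
  push_cast at hka hak
  refine IsGreatest.csSup_eq ⟨⟨cliqueJoinEmpty n k, ?_, card_edgeSet_cliqueJoinEmpty.symm⟩, ?_⟩
  · linarith [guessingNumber_cliqueJoinEmpty_le (n := n) (k := k) hs]
  · rintro _ ⟨G, hG, rfl⟩
    simpa using card_edgeSet_le_of_guessingNumber_lt hs (hG.trans_le hak)

/-- For `s ≥ 2`, `a > 0`, `k = ⌈a⌉ - 1` and `n > ⌈a⌉`, the extremal number is
`ex(n, gn_s ≥ a) = C(n,2) - C(n-k,2)`. -/
theorem exGN_eq (s : ℕ) (hs : 2 ≤ s) (a : ℝ) (ha : 0 < a) (k n : ℕ)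
    (hk : (k : ℤ) = ⌈a⌉ - 1) (hn : ⌈a⌉ < (n : ℤ)) :
    exGN n s a = n.choose 2 - (n - k).choose 2 :=
  exGN_eq_general s hs a k n hk
end

section
/- For every integer n ≥ 2 and every integer s ≥ 2, the saturation number satisfies sat(n, gn_s ≥ 2) = n − 1. Moreover, every (gn_s ≥ 2)-saturated graph on n vertices with exactly n−1 edges is isomorphic to the star K_{1,n−1}. -/
/-!
If every edge of `G` meets one vertex `x`, a fixed coloring is determined by its color at `x`,
so at most `s` colorings are fixed and `gn(G, s) ≤ 1`. Otherwise `G` contains a triangle or two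
disjoint edges, and letting the colors on each of these cliques sum to zero fixes `s²`
colorings, so `gn(G, s) ≥ 2`. Hence `gn(G, s) < 2` exactly for the subgraphs of stars; the
saturated graphs are the maximal ones, the spanning stars `K_{1,n-1}`, all with `n - 1` edges.
-/

open SimpleGraph

section

variable {V W : Type*} {s : ℕ}

abbrev FixedColorings (f : V → (V → Fin s) → Fin s) : Type _ :=
  {c : V → Fin s // ∀ v, f v c = c v}

lemma bddAbove_card_fixedColorings [Finite V] (G : SimpleGraph V) (s : ℕ) :
    BddAbove {m : ℕ | ∃ f : V → (V → Fin s) → Fin s, IsGuessingStrategy G s f ∧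
      m = Nat.card (FixedColorings f)} := by
  refine ⟨Nat.card (V → Fin s), ?_⟩
  rintro m ⟨f, -, rfl⟩
  exact Nat.card_le_card_of_injective _ Subtype.val_injective

lemma IsGuessingStrategy.card_fixedColorings_le [Finite V] {G : SimpleGraph V}
    {f : V → (V → Fin s) → Fin s} (hf : IsGuessingStrategy G s f) :
    Nat.card (FixedColorings f) ≤ maxFixedPoints G s :=
  le_csSup (bddAbove_card_fixedColorings G s) ⟨f, hf, rfl⟩

lemma exists_isGuessingStrategy_card_fixedColorings_eq [Finite V] [NeZero s]
    (G : SimpleGraph V) :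
    ∃ f, IsGuessingStrategy G s f ∧ Nat.card (FixedColorings f) = maxFixedPoints G s := by
  have hconst : IsGuessingStrategy G s fun _ _ => 0 := fun _ _ _ _ => rfl
  obtain ⟨f, hf, h⟩ := Nat.sSup_mem (Set.nonempty_of_mem (Exists.intro _ ⟨hconst, rfl⟩))
    (bddAbove_card_fixedColorings G s)
  exact ⟨f, hf, h.symm⟩

lemma maxFixedPoints_le_pow_of_isVertexCover {G : SimpleGraph V} {S : Finset V}
    (hS : G.IsVertexCover S) : maxFixedPoints G s ≤ s ^ S.card := by
  refine csSup_le' ?_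
  rintro m ⟨f, hf, rfl⟩
  -- a vertex off the cover sees only the cover, so a fixed coloring is determined there
  have hinj : Function.Injective fun c : FixedColorings f => fun x : S => c.1 x := by
    rintro ⟨c₁, h₁⟩ ⟨c₂, h₂⟩ h
    have hS' : ∀ v ∈ S, c₁ v = c₂ v := fun v hv => congrFun h ⟨v, hv⟩
    ext1; funext v
    by_cases hv : v ∈ S
    · exact hS' v hv
    · change c₁ v = c₂ v
      rw [← h₁, ← h₂]
      exact hf v _ _ fun u hvu => hS' u ((hS hvu).resolve_left hv)
  calc Nat.card (FixedColorings f)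
      ≤ Nat.card (S → Fin s) := Nat.card_le_card_of_injective _ hinj
    _ = s ^ S.card := by simp [Nat.card_fun]

lemma SimpleGraph.IsContained.maxFixedPoints_le [Finite W] [NeZero s] {A : SimpleGraph V}
    {B : SimpleGraph W} (h : A ⊑ B) : maxFixedPoints A s ≤ maxFixedPoints B s := by
  obtain ⟨φ⟩ := h
  have hφ : Function.Injective φ := φ.injective
  refine csSup_le' ?_
  rintro m ⟨f, hf, rfl⟩
  let g : W → (W → Fin s) → Fin s := fun w c =>
    Function.extend φ (fun v => f v (c ∘ φ)) 0 w
  have hg : IsGuessingStrategy B s g := by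
    intro w c₁ c₂ h
    by_cases hw : ∃ v, φ v = w
    · obtain ⟨v, rfl⟩ := hw
      simp only [g, hφ.extend_apply]
      exact hf v _ _ fun u hvu => h _ (φ.toHom.map_adj hvu)
    · simp only [g, Function.extend_apply' _ _ _ hw]
  have hfix (c : FixedColorings f) (w : W) :
      g w (Function.extend φ c.1 0) = Function.extend φ c.1 0 w := by
    by_cases hw : ∃ v, φ v = w
    · obtain ⟨v, rfl⟩ := hw
      simp only [g, hφ.extend_apply, Function.extend_comp hφ, c.2 v]
    · simp only [g, Function.extend_apply' _ _ _ hw]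
  have hinj : Function.Injective fun c : FixedColorings f =>
      (⟨_, hfix c⟩ : FixedColorings g) := by
    intro c₁ c₂ h
    have := congrArg (· ∘ φ) (congrArg Subtype.val h)
    simp only [Function.extend_comp hφ] at this
    exact Subtype.ext this
  exact (Nat.card_le_card_of_injective _ hinj).trans hg.card_fixedColorings_le

lemma mul_maxFixedPoints_le_maxFixedPoints_sum [Finite V] [Finite W] [NeZero s]
    (G : SimpleGraph V) (H : SimpleGraph W) :
    maxFixedPoints G s * maxFixedPoints H s ≤ maxFixedPoints (G ⊕g H) s := by
  obtain ⟨f, hf, hfc⟩ := exists_isGuessingStrategy_card_fixedColorings_eq (s := s) G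
  obtain ⟨g, hg, hgc⟩ := exists_isGuessingStrategy_card_fixedColorings_eq (s := s) H
  let h : V ⊕ W → (V ⊕ W → Fin s) → Fin s :=
    Sum.elim (fun v c => f v (c ∘ .inl)) (fun w c => g w (c ∘ .inr))
  have hh : IsGuessingStrategy (G ⊕g H) s h := by
    rintro (v | w) c₁ c₂ hc
    · exact hf v _ _ fun u hvu => hc (.inl u) hvu
    · exact hg w _ _ fun u hwu => hc (.inr u) hwu
  let e : FixedColorings h ≃ FixedColorings f × FixedColorings g :=
    ((Equiv.sumArrowEquivProdArrow V W (Fin s)).subtypeEquiv fun _ => Sum.forall).trans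
      Equiv.subtypeProdEquivProd
  rw [← hfc, ← hgc, ← Nat.card_prod, ← Nat.card_congr e]
  exact hh.card_fixedColorings_le

lemma pow_le_maxFixedPoints_top [NeZero s] (n : ℕ) :
    s ^ n ≤ maxFixedPoints (⊤ : SimpleGraph (Fin (n + 1))) s := by
  let f : Fin (n + 1) → (Fin (n + 1) → Fin s) → Fin s := fun v c =>
    -∑ u ∈ Finset.univ.erase v, c u
  have hf : IsGuessingStrategy ⊤ s f := fun v c₁ c₂ h => by
    simp only [f]
    rw [Finset.sum_congr rfl fun u hu => h u (Finset.ne_of_mem_erase hu).symm]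
  have hfix (c : Fin (n + 1) → Fin s) (hc : ∑ u, c u = 0) (v) : f v c = c v := by
    rw [← Finset.add_sum_erase _ _ (Finset.mem_univ v)] at hc
    exact (eq_neg_of_add_eq_zero_left hc).symm
  let ι : (Fin n → Fin s) → FixedColorings f := fun q =>
    ⟨Fin.cons (-∑ i, q i) q, hfix _ (by simp [Fin.sum_cons])⟩
  have hι : Function.Injective ι := fun q₁ q₂ h => by
    simpa [ι] using congrArg (Fin.tail ∘ Subtype.val) h
  simpa using (Nat.card_le_card_of_injective ι hι).trans hf.card_fixedColorings_le

lemma le_guessingNumber_iff {G : SimpleGraph V} (hs : 1 < s) {k : ℕ} (hk : k ≠ 0) :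
    (k : ℝ) ≤ guessingNumber G s ↔ s ^ k ≤ maxFixedPoints G s := by
  unfold guessingNumber
  rcases Nat.eq_zero_or_pos (maxFixedPoints G s) with h0 | hpos
  · simp [h0, hk, Nat.pos_iff_ne_zero.1 (by omega : 0 < s)]
  · rw [Real.le_logb_iff_rpow_le (by exact_mod_cast hs) (by exact_mod_cast hpos),
      Real.rpow_natCast]
    exact_mod_cast Iff.rfl

lemma SimpleGraph.exists_adj_avoiding_of_not_le_starGraph {G : SimpleGraph V} {a : V}
    (h : ¬G ≤ starGraph a) (b : V) :
    (∃ u v, G.Adj u v ∧ u ≠ a ∧ v ≠ a ∧ u ≠ b ∧ v ≠ b) ∨ ∃ v, G.Adj b v ∧ v ≠ a := by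
  obtain ⟨u, v, huv, hnot⟩ : ∃ u v, G.Adj u v ∧ ¬(starGraph a).Adj u v := by
    simpa [SimpleGraph.le_iff_adj] using h
  rw [starGraph_adj] at hnot
  by_cases hub : u = b
  · exact .inr ⟨v, hub ▸ huv, by grind [huv.ne]⟩
  by_cases hvb : v = b
  · exact .inr ⟨u, hvb ▸ huv.symm, by grind [huv.ne]⟩
  exact .inl ⟨u, v, huv, by grind [huv.ne]⟩

lemma SimpleGraph.exists_triangle_or_disjoint_edges [Nonempty V] {G : SimpleGraph V}
    (h : ∀ x, ¬G ≤ starGraph x) :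
    (∃ a b c, G.Adj a b ∧ G.Adj a c ∧ G.Adj b c) ∨
      ∃ a b c d, G.Adj a b ∧ G.Adj c d ∧ a ≠ c ∧ a ≠ d ∧ b ≠ c ∧ b ≠ d := by
  obtain ⟨a, b, hab⟩ : ∃ a b, G.Adj a b := by
    by_contra! hG
    exact h (Classical.arbitrary V) fun a b hab => (hG a b hab).elim
  rcases exists_adj_avoiding_of_not_le_starGraph (h a) b with
    ⟨u, v, huv, hu⟩ | ⟨v, hbv, hva⟩
  · exact .inr ⟨a, b, u, v, hab, huv, by grind⟩
  rcases exists_adj_avoiding_of_not_le_starGraph (h b) a with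
    ⟨u, w, huw, hu⟩ | ⟨u, hau, hub⟩
  · exact .inr ⟨a, b, u, w, hab, huw, by grind⟩
  by_cases huv : u = v
  · exact .inl ⟨a, b, v, hab, huv ▸ hau, hbv⟩
  · exact .inr ⟨a, u, b, v, hau, hbv, hab.ne, hva.symm, hub, huv⟩

lemma SimpleGraph.top_isContained_of_adj {G : SimpleGraph V} {a b c : V} (hab : G.Adj a b)
    (hac : G.Adj a c) (hbc : G.Adj b c) : completeGraph (Fin 3) ⊑ G := by
  classical
  exact (not_cliqueFree_iff_top_isContained 3).1 fun hG =>
    hG {a, b, c} (is3Clique_triple_iff.2 ⟨hab, hac, hbc⟩)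

lemma SimpleGraph.top_sum_top_isContained_of_adj {G : SimpleGraph V} {a b c d : V}
    (hab : G.Adj a b) (hcd : G.Adj c d) (hac : a ≠ c) (had : a ≠ d) (hbc : b ≠ c)
    (hbd : b ≠ d) : completeGraph (Fin 2) ⊕g completeGraph (Fin 2) ⊑ G := by
  refine ⟨⟨⟨Sum.elim ![a, b] ![c, d], ?_⟩, ?_⟩⟩
  · rintro (i | i) (j | j) hij <;> simp only [completeGraph_eq_top, sum_adj, top_adj] at hij <;>
      fin_cases i <;> fin_cases j <;> simp_all [hab.symm, hcd.symm]
  · rintro (i | i) (j | j) hij <;> fin_cases i <;> fin_cases j <;>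
      simp_all [hab.ne, hab.ne', hcd.ne, hcd.ne']

lemma two_le_guessingNumber_iff {G : SimpleGraph V} (hs : 2 ≤ s) :
    2 ≤ guessingNumber G s ↔ s ^ 2 ≤ maxFixedPoints G s := by
  exact_mod_cast le_guessingNumber_iff (G := G) hs two_ne_zero

lemma two_le_guessingNumber_of_triangle [Finite V] {G : SimpleGraph V} (hs : 2 ≤ s)
    {a b c : V} (hab : G.Adj a b) (hac : G.Adj a c) (hbc : G.Adj b c) :
    2 ≤ guessingNumber G s := by
  have : NeZero s := ⟨by omega⟩
  exact (two_le_guessingNumber_iff hs).2 <|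
    (pow_le_maxFixedPoints_top 2).trans (top_isContained_of_adj hab hac hbc).maxFixedPoints_le

lemma guessingNumber_lt_two_iff [Finite V] [Nonempty V] {G : SimpleGraph V} (hs : 2 ≤ s) :
    guessingNumber G s < 2 ↔ ∃ x, G ≤ starGraph x := by
  have : NeZero s := ⟨by omega⟩
  rw [← not_le, two_le_guessingNumber_iff hs, not_le]
  constructor
  · intro hlt
    by_contra! h
    refine hlt.not_ge ?_
    rcases exists_triangle_or_disjoint_edges h with
      ⟨a, b, c, hab, hac, hbc⟩ | ⟨a, b, c, d, hab, hcd, hac, had, hbc, hbd⟩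
    · exact (two_le_guessingNumber_iff hs).1
        (two_le_guessingNumber_of_triangle hs hab hac hbc)
    · calc s ^ 2 = s ^ 1 * s ^ 1 := by ring
        _ ≤ _ := Nat.mul_le_mul (pow_le_maxFixedPoints_top 1) (pow_le_maxFixedPoints_top 1)
        _ ≤ _ := mul_maxFixedPoints_le_maxFixedPoints_sum _ _
        _ ≤ _ := (top_sum_top_isContained_of_adj hab hcd hac had hbc hbd).maxFixedPoints_le
  · rintro ⟨x, hx⟩
    have hcover : G.IsVertexCover ({x} : Finset V) := fun u v huv => by
      simpa using (starGraph_adj.1 (hx huv)).2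
    refine (maxFixedPoints_le_pow_of_isVertexCover hcover).trans_lt ?_
    simpa using lt_self_pow₀ (by omega : 1 < s) one_lt_two

lemma gnSaturated_two_iff [Finite V] [Nonempty V] {G : SimpleGraph V} (hs : 2 ≤ s) :
    GNSaturated G s 2 ↔ ∃ x, G = starGraph x := by
  constructor
  · rintro ⟨hlt, hsat⟩
    obtain ⟨x, hx⟩ := (guessingNumber_lt_two_iff hs).1 hlt
    have hcenter (v : V) (hxv : x ≠ v) : G.Adj x v := by
      by_contra hnadj
      refine (hsat x v hxv hnadj).not_gt
        ((guessingNumber_lt_two_iff hs).2 ⟨x, sup_le hx ?_⟩)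
      intro a b hab
      rw [fromEdgeSet_adj, Set.mem_singleton_iff, Sym2.eq_iff] at hab
      grind [starGraph_adj]
    refine ⟨x, le_antisymm hx fun u v huv => ?_⟩
    obtain ⟨hne, rfl | rfl⟩ := starGraph_adj.1 huv
    · exact hcenter v hne
    · exact (hcenter u hne.symm).symm
  · rintro ⟨x, rfl⟩
    refine ⟨(guessingNumber_lt_two_iff hs).2 ⟨x, le_rfl⟩, fun u w huw hnadj => ?_⟩
    have hux : u ≠ x := fun h => hnadj (starGraph_adj.2 ⟨huw, .inl h⟩)
    have hwx : w ≠ x := fun h => hnadj (starGraph_adj.2 ⟨huw, .inr h⟩)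
    exact two_le_guessingNumber_of_triangle hs (a := x) (b := u) (c := w)
      (.inl (starGraph_center_adj hux.symm)) (.inl (starGraph_center_adj hwx.symm))
      (.inr (by simp [huw]))

lemma SimpleGraph.card_edgeSet_starGraph [Finite V] (x : V) :
    Nat.card (starGraph x).edgeSet = Nat.card V - 1 := by
  classical
  have := Fintype.ofFinite V
  have h := (isTree_starGraph x).card_edgeFinset
  rw [Nat.card_eq_fintype_card, Nat.card_eq_fintype_card, card_edgeSet]
  omega

def SimpleGraph.Iso.starGraph (e : V ≃ W) (x : V) : starGraph x ≃g starGraph (e x) :=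
  ⟨e, by simp⟩

lemma cliqueJoinEmpty_one_eq_starGraph {n : ℕ} (hn : 0 < n) :
    cliqueJoinEmpty n 1 = starGraph ⟨0, hn⟩ := by
  ext u v
  simp [cliqueJoinEmpty, Fin.ext_iff]

end

/-- For `n ≥ 2` and `s ≥ 2`, `sat(n, gn_s ≥ 2) = n - 1`, and every
`(gn_s ≥ 2)`-saturated graph on `n` vertices with `n - 1` edges is isomorphic to
the star `K_{1,n-1}` (which is `K_1 ⊕ E_{n-1}`). -/
theorem satGN_two (n s : ℕ) (hn : 2 ≤ n) (hs : 2 ≤ s) :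
    satGN n s 2 = n - 1 ∧
    ∀ G : SimpleGraph (Fin n), GNSaturated G s 2 → Nat.card G.edgeSet = n - 1 →
      Nonempty (G ≃g cliqueJoinEmpty n 1) := by
  have : Nonempty (Fin n) := ⟨⟨0, by omega⟩⟩
  have hcount : {m | ∃ G : SimpleGraph (Fin n), GNSaturated G s 2 ∧ m = Nat.card G.edgeSet} =
      {n - 1} := by
    have hcard (x : Fin n) : Nat.card (starGraph x).edgeSet = n - 1 := by
      rw [card_edgeSet_starGraph, Nat.card_fin]
    ext m
    simp only [Set.mem_ofPred_eq, Set.mem_singleton_iff, gnSaturated_two_iff hs]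
    constructor
    · rintro ⟨_, ⟨x, rfl⟩, rfl⟩
      exact hcard x
    · rintro rfl
      exact ⟨_, ⟨⟨0, by omega⟩, rfl⟩, (hcard _).symm⟩
  refine ⟨by rw [satGN, hcount, csInf_singleton], fun G hG _ => ?_⟩
  obtain ⟨x, rfl⟩ := (gnSaturated_two_iff hs).1 hG
  rw [cliqueJoinEmpty_one_eq_starGraph (by omega)]
  exact ⟨by simpa using Iso.starGraph (Equiv.swap x ⟨0, by omega⟩) x⟩
end
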